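/- arXiv:1411.3984 — 3 statements merged into one kernel-verified Lean document; each statement's English description precedes it below -/
import Mathlib

section
/- Let S be a separable metric space, X an S-valued random variable on a probability space, and s ∈ S. Then the Ky Fan distance between X and the constant random variable s equals the Prokhorov distance between the law of X and the Dirac measure δ_s: α(X,s) = d_Pr(L(X), δ_s). -/
open MeasureTheory Metric Filter Topology

/-- Ky Fan metric: α(Z,W) = inf {ε ≥ 0 : P(d(Z,W) > ε) ≤ ε}. -/
noncomputable def kyFanDist {Ω S : Type*} [MeasurableSpace Ω] [PseudoMetricSpace S]
    (P : Measure Ω) (Z W : Ω → S) : ℝ :=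
  sInf {ε : ℝ | 0 ≤ ε ∧ P {ω | ε < dist (Z ω) (W ω)} ≤ ENNReal.ofReal ε}

/-!
Both distances are infima over the same tail bounds `μ {x | t < dist x s} ≤ t`, where `μ` is the
law of `X`: for the Ky Fan distance this is the definition read through the law. If the tail bound
holds and `t < ε`, a set `B` either has `s` in its `ε`-thickening, which `δ_s` then charges fully,
or lies inside the tail `{t < dist · s}`; so `d_Pr(μ, δ_s) ≤ t`. Conversely, testing
`d_Pr(μ, δ_s) < t` on the tail set itself, whose `t`-thickening misses `s`, gives the tail bound.
-/

namespace MeasureTheory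

variable {S : Type*} [PseudoMetricSpace S] [MeasurableSpace S] [OpensMeasurableSpace S]

lemma measurableSet_setOf_lt_dist (s : S) (t : ℝ) :
    MeasurableSet {x : S | t < dist x s} :=
  (isOpen_lt continuous_const (continuous_id.dist continuous_const)).measurableSet

lemma levyProkhorovDist_dirac_le_of_measure_lt_dist_le (μ : Measure S) [IsProbabilityMeasure μ]
    (s : S) {t : ℝ} (ht : 0 ≤ t)
    (h_tail : μ {x | t < dist x s} ≤ ENNReal.ofReal t) :
    levyProkhorovDist μ (Measure.dirac s) ≤ t := by
  refine levyProkhorovDist_le_of_forall_le μ _ ht fun ε B hε _ ↦ ?_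
  by_cases hs : s ∈ thickening ε B
  · rw [Measure.dirac_apply_of_mem hs]
    exact prob_le_one.trans le_self_add
  · have hB : B ⊆ {x | t < dist x s} := fun x hx ↦
      hε.trans_le (dist_comm s x ▸ not_lt.mp fun hsx ↦ hs (mem_thickening_iff.mpr ⟨x, hx, hsx⟩))
    calc μ B ≤ μ {x | t < dist x s} := measure_mono hB
      _ ≤ ENNReal.ofReal ε := h_tail.trans (ENNReal.ofReal_le_ofReal hε.le)
      _ ≤ _ := le_add_self

lemma measure_lt_dist_le_of_levyProkhorovDist_dirac_lt (μ : Measure S) [IsFiniteMeasure μ]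
    (s : S) {t : ℝ}
    (h : levyProkhorovDist μ (Measure.dirac s) < t) :
    μ {x | t < dist x s} ≤ ENNReal.ofReal t := by
  have ht : 0 ≤ t := ENNReal.toReal_nonneg.trans h.le
  have hlt : levyProkhorovEDist μ (Measure.dirac s) < ENNReal.ofReal t :=
    (ENNReal.lt_ofReal_iff_toReal_lt (levyProkhorovEDist_ne_top _ _)).mpr h
  have hs : s ∉ thickening t {x | t < dist x s} := fun hs ↦ by
    obtain ⟨x, hx, hsx⟩ := mem_thickening_iff.mp hs
    exact (hx.trans (dist_comm x s ▸ hsx)).false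
  have h_dirac : Measure.dirac s (thickening t {x | t < dist x s}) = 0 := by
    rw [Measure.dirac_apply' s isOpen_thickening.measurableSet, Set.indicator_of_notMem hs]
  simpa [h_dirac, ENNReal.toReal_ofReal ht] using
    left_measure_le_of_levyProkhorovEDist_lt hlt (measurableSet_setOf_lt_dist s t)

theorem levyProkhorovDist_dirac_eq_sInf (μ : Measure S) [IsProbabilityMeasure μ] (s : S) :
    levyProkhorovDist μ (Measure.dirac s) =
      sInf {ε : ℝ | 0 ≤ ε ∧ μ {x | ε < dist x s} ≤ ENNReal.ofReal ε} := by
  have h_bdd : BddBelow {ε : ℝ | 0 ≤ ε ∧ μ {x | ε < dist x s} ≤ ENNReal.ofReal ε} :=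
    ⟨0, fun _ hε ↦ hε.1⟩
  apply le_antisymm
  · refine le_csInf ⟨1, zero_le_one, ?_⟩ fun t ht ↦
      levyProkhorovDist_dirac_le_of_measure_lt_dist_le μ s ht.1 ht.2
    simpa using prob_le_one
  · refine le_of_forall_pos_le_add fun δ hδ ↦ csInf_le h_bdd ?_
    refine ⟨add_nonneg ENNReal.toReal_nonneg hδ.le, ?_⟩
    exact measure_lt_dist_le_of_levyProkhorovDist_dirac_lt μ s (lt_add_of_pos_right _ hδ)

end MeasureTheory

lemma kyFanDist_const_eq_sInf_map {Ω S : Type*} [MeasurableSpace Ω] [PseudoMetricSpace S]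
    [MeasurableSpace S] [OpensMeasurableSpace S] (P : Measure Ω) {X : Ω → S} (hX : Measurable X)
    (s : S) :
    kyFanDist P X (fun _ ↦ s) =
      sInf {ε : ℝ | 0 ≤ ε ∧ P.map X {x | ε < dist x s} ≤ ENNReal.ofReal ε} := by
  simp_rw [Measure.map_apply hX (measurableSet_setOf_lt_dist s _)]
  rfl

theorem kyFan_eq_prokhorov_of_const_general {Ω S : Type*} [MeasurableSpace Ω]
    [MetricSpace S] [MeasurableSpace S] [BorelSpace S]
    (P : Measure Ω) [IsProbabilityMeasure P] (X : Ω → S) (hX : Measurable X) (s : S) :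
    kyFanDist P X (fun _ => s) = levyProkhorovDist (P.map X) (Measure.dirac s) := by
  have : IsProbabilityMeasure (P.map X) := Measure.isProbabilityMeasure_map hX.aemeasurable
  rw [kyFanDist_const_eq_sInf_map P hX s, levyProkhorovDist_dirac_eq_sInf]

/-- The Ky Fan distance between a random variable and a constant equals the Prokhorov
distance between its law and the corresponding Dirac measure. -/
theorem kyFan_eq_prokhorov_of_const {Ω S : Type*} [MeasurableSpace Ω]
    [MetricSpace S] [TopologicalSpace.SeparableSpace S] [MeasurableSpace S] [BorelSpace S]
    (P : Measure Ω) [IsProbabilityMeasure P] (X : Ω → S) (hX : Measurable X) (s : S) :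
    kyFanDist P X (fun _ => s) = levyProkhorovDist (P.map X) (Measure.dirac s) :=
  kyFan_eq_prokhorov_of_const_general P X hX s
end

section
/- Let S be a separable metric space and Z, W two S-valued random variables on a probability space (Ω, Σ, P). Then d_Pr(Z_*P, W_*P) ≤ α(Z, W), i.e., the Prokhorov distance between the laws is at most the Ky Fan distance between the random variables. -/
open MeasureTheory Metric Filter Topology

section KyFan

variable {Ω S : Type*} [PseudoMetricSpace S] {Z W : Ω → S}

lemma preimage_subset_preimage_thickening_union (ε : ℝ) (B : Set S) :
    Z ⁻¹' B ⊆ W ⁻¹' thickening ε B ∪ {ω | ε ≤ dist (Z ω) (W ω)} := by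
  intro ω hZω
  by_cases hclose : dist (Z ω) (W ω) < ε
  · exact Or.inl (mem_thickening_iff.mpr ⟨Z ω, hZω, by rwa [dist_comm]⟩)
  · exact Or.inr (not_lt.mp hclose)

variable [MeasurableSpace Ω] {P : Measure Ω}

lemma kyFanDist_nonneg : 0 ≤ kyFanDist P Z W :=
  Real.sInf_nonneg fun _ hε ↦ hε.1

lemma one_mem_kyFanDist_set [IsZeroOrProbabilityMeasure P] :
    1 ∈ {ε : ℝ | 0 ≤ ε ∧ P {ω | ε < dist (Z ω) (W ω)} ≤ ENNReal.ofReal ε} :=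
  ⟨zero_le_one, by simpa using prob_le_one⟩

lemma measure_le_dist_le_of_kyFanDist_lt [IsZeroOrProbabilityMeasure P] {ε : ℝ}
    (hε : kyFanDist P Z W < ε) :
    P {ω | ε ≤ dist (Z ω) (W ω)} ≤ ENNReal.ofReal ε := by
  obtain ⟨ε', ⟨-, hε'⟩, hε'ε⟩ :=
    (csInf_lt_iff ⟨0, fun _ h ↦ h.1⟩ ⟨1, one_mem_kyFanDist_set⟩).mp hε
  calc P {ω | ε ≤ dist (Z ω) (W ω)}
      ≤ P {ω | ε' < dist (Z ω) (W ω)} := measure_mono fun ω hω ↦ hε'ε.trans_le hω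
    _ ≤ ENNReal.ofReal ε' := hε'
    _ ≤ ENNReal.ofReal ε := ENNReal.ofReal_le_ofReal hε'ε.le

lemma measure_preimage_le_thickening_add (ε : ℝ) (B : Set S) :
    P (Z ⁻¹' B) ≤ P (W ⁻¹' thickening ε B) + P {ω | ε ≤ dist (Z ω) (W ω)} :=
  (measure_mono (preimage_subset_preimage_thickening_union ε B)).trans (measure_union_le _ _)

end KyFan

theorem prokhorov_le_kyFan_general {Ω S : Type*} [MeasurableSpace Ω]
    [MetricSpace S] [MeasurableSpace S] [BorelSpace S]
    (P : Measure Ω) [IsProbabilityMeasure P] (Z W : Ω → S)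
    (hZ : Measurable Z) (hW : Measurable W) :
    levyProkhorovDist (P.map Z) (P.map W) ≤ kyFanDist P Z W := by
  have := Measure.isProbabilityMeasure_map (μ := P) hZ.aemeasurable
  have := Measure.isProbabilityMeasure_map (μ := P) hW.aemeasurable
  refine levyProkhorovDist_le_of_forall_le _ _ kyFanDist_nonneg fun ε B hε hB ↦ ?_
  rw [Measure.map_apply hZ hB, Measure.map_apply hW isOpen_thickening.measurableSet]
  calc P (Z ⁻¹' B)
      ≤ P (W ⁻¹' thickening ε B) + P {ω | ε ≤ dist (Z ω) (W ω)} :=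
        measure_preimage_le_thickening_add ε B
    _ ≤ P (W ⁻¹' thickening ε B) + ENNReal.ofReal ε := by
        gcongr; exact measure_le_dist_le_of_kyFanDist_lt hε

/-- The Prokhorov distance of the laws is at most the Ky Fan distance of the random
variables. -/
theorem prokhorov_le_kyFan {Ω S : Type*} [MeasurableSpace Ω]
    [MetricSpace S] [TopologicalSpace.SeparableSpace S] [MeasurableSpace S] [BorelSpace S]
    (P : Measure Ω) [IsProbabilityMeasure P] (Z W : Ω → S)
    (hZ : Measurable Z) (hW : Measurable W) :
    levyProkhorovDist (P.map Z) (P.map W) ≤ kyFanDist P Z W :=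
  prokhorov_le_kyFan_general P Z W hZ hW
end

section
/- Let X be a Borel subset of a separable metric space X' with inclusion map i : X → X'. Then the induced pushforward map i_* : M(X) → M(X') on Borel probability measures is isometric with respect to the Prokhorov metrics on M(X) and M(X'). -/
open MeasureTheory Metric EMetric Set

section Thickening

variable {α β : Type*} [PseudoEMetricSpace α] [PseudoEMetricSpace β] {f : α → β}

lemma Isometry.preimage_thickening_image (hf : Isometry f) (δ : ℝ) (s : Set α) :
    f ⁻¹' thickening δ (f '' s) = thickening δ s := by
  ext x
  simp only [mem_preimage, mem_thickening_iff_infEDist_lt, infEDist_image hf]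

lemma LipschitzWith.thickening_preimage_subset (hf : LipschitzWith 1 f) (δ : ℝ) (t : Set β) :
    thickening δ (f ⁻¹' t) ⊆ f ⁻¹' thickening δ t := by
  intro x hx
  obtain ⟨y, hy, hxy⟩ := (mem_thickening_iff_exists_edist_lt _ _).1 hx
  refine (mem_thickening_iff_exists_edist_lt _ _).2 ⟨f y, hy, ?_⟩
  calc edist (f x) (f y) ≤ 1 * edist x y := hf x y
    _ = edist x y := one_mul _
    _ < _ := hxy

end Thickening

namespace MeasurableEmbedding

variable {α β : Type*} [PseudoEMetricSpace α] [PseudoEMetricSpace β]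
  [MeasurableSpace α] [MeasurableSpace β] {f : α → β}

/-- Test sets `B` of `α` are handled through `f '' B`, test sets `B` of `β` through `f ⁻¹' B`. -/
lemma forall_map_le_map_thickening_add_iff (hf : MeasurableEmbedding f) (hf' : Isometry f)
    (μ ν : Measure α) (δ : ℝ) (ε : ENNReal) :
    (∀ B, MeasurableSet B → μ.map f B ≤ ν.map f (thickening δ B) + ε) ↔
      ∀ B, MeasurableSet B → μ B ≤ ν (thickening δ B) + ε := by
  constructor
  · intro h B hB
    simpa only [hf.map_apply, preimage_image_eq _ hf.injective,
      hf'.preimage_thickening_image] using h _ (hf.measurableSet_image.2 hB)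
  · intro h B hB
    rw [hf.map_apply, hf.map_apply]
    exact (h _ (hf.measurable hB)).trans
      (add_le_add_left (measure_mono (hf'.lipschitz.thickening_preimage_subset δ B)) ε)

theorem levyProkhorovEDist_map (hf : MeasurableEmbedding f) (hf' : Isometry f)
    (μ ν : Measure α) :
    levyProkhorovEDist (μ.map f) (ν.map f) = levyProkhorovEDist μ ν := by
  unfold levyProkhorovEDist
  congr 1
  ext ε
  simp only [mem_ofPred_eq, imp_and, forall_and,
    hf.forall_map_le_map_thickening_add_iff hf']

theorem levyProkhorovDist_map (hf : MeasurableEmbedding f) (hf' : Isometry f)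
    (μ ν : Measure α) :
    levyProkhorovDist (μ.map f) (ν.map f) = levyProkhorovDist μ ν :=
  congrArg ENNReal.toReal (hf.levyProkhorovEDist_map hf' μ ν)

end MeasurableEmbedding

theorem prokhorov_isometric_subtype_general {X' : Type*} [MetricSpace X'] [MeasurableSpace X']
    (X : Set X') (hX : MeasurableSet X)
    (μ ν : Measure X) :
    levyProkhorovDist (μ.map (Subtype.val : X → X')) (ν.map (Subtype.val : X → X')) =
      levyProkhorovDist μ ν :=
  (MeasurableEmbedding.subtype_coe hX).levyProkhorovDist_map isometry_subtype_coe μ ν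

/-- The pushforward along the inclusion of a Borel subset of a separable metric space is
an isometry for the Prokhorov metrics. -/
theorem prokhorov_isometric_subtype {X' : Type*} [MetricSpace X']
    [TopologicalSpace.SeparableSpace X'] [MeasurableSpace X'] [BorelSpace X']
    (X : Set X') (hX : MeasurableSet X)
    (μ ν : Measure X) [IsProbabilityMeasure μ] [IsProbabilityMeasure ν] :
    levyProkhorovDist (μ.map (Subtype.val : X → X')) (ν.map (Subtype.val : X → X')) =
      levyProkhorovDist μ ν :=
  prokhorov_isometric_subtype_general X hX μ ν
end
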